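/- arXiv:1906.06157 — 2 statements merged into one kernel-verified Lean document; each statement's English description precedes it below -/
import Mathlib

section
/- Let (w_i)_{i=0}^{k^n-1} be the (k,n)-prefer-max cycle with k > 1, n ≥ 1, and let i_0 = min{ i : the symbol k-1 does not occur in w_i }. Then every word w ∈ [k]^n that contains the symbol k-1 appears among the windows before index i_0; that is, there exists j < i_0 with w_j = w. -/
/-- `preferMaxAux k n i` is the list of windows `[wᵢ, wᵢ₋₁, ..., w₀]` of the
`(k,n)`-prefer-max cycle, newest first.  The first window is `w₀ = 0^{n-1}(k-1)` and,
if `wᵢ = σx`, then `wᵢ₊₁ = xτ` where `τ` is the maximal symbol in `[k] = {0,…,k-1}`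
such that `xτ` has not appeared among `w₀,…,wᵢ` (computed via `Nat.findGreatest`,
which returns `0` if no such symbol exists; the existence of such a symbol at each
step is part of the correctness of the construction). -/
def preferMaxAux (k n : ℕ) : ℕ → List (List ℕ)
  | 0 => [List.replicate (n - 1) 0 ++ [k - 1]]
  | i + 1 =>
    let prev := preferMaxAux k n i
    let w := prev.headI
    (w.tail ++ [Nat.findGreatest (fun τ => (w.tail ++ [τ]) ∉ prev) (k - 1)]) :: prev

/-- `preferMax k n i` is the `i`-th window `wᵢ` of the `(k,n)`-prefer-max cycle. -/
def preferMax (k n i : ℕ) : List ℕ := (preferMaxAux k n i).headI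

/-!
Read the windows as a walk in the de Bruijn graph on `[k]^{n-1}`, window `w_j` being the edge from
`dropLast w_j` to `tail w_j`. Up to `i₀` the windows are pairwise distinct: a first repeat would
mean that all `k` extensions of some node `x ∋ k - 1` were used, so the walk left `x` at least `k`
times and entered it `k + 1` times, through only `k` possible edges. Comparing entries and exits
at a node before `i₀` gives two closure properties of the set of windows seen before `i₀`: if
`k - 1 ∈ x` and `x0` was seen, so was every `cx`; if `k - 1 ∉ y` and `y(k-1)` was seen, so was
`(k-1)y` (here one uses that `w_{i₀}` starts at the node `0^{n-1}` where the walk began). So a word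
`cx` containing `k - 1` was seen as soon as `x0` (if `k - 1 ∈ x`), resp. `x(k-1)`, was; iterating
this step (`shiftFill`) leads every such word to `w₀ = 0^{n-1}(k-1)`.
-/

open Finset

theorem List.exists_eq_append_cons_notMem {α : Type*} {a : α} {l : List α} (h : a ∈ l) :
    ∃ v s, l = v ++ a :: s ∧ a ∉ s := by
  induction l with
  | nil => simp at h
  | cons b l ih =>
    by_cases hal : a ∈ l
    · obtain ⟨v, s, rfl, hs⟩ := ih hal
      exact ⟨b :: v, s, rfl, hs⟩
    · obtain rfl : a = b := (List.mem_cons.1 h).resolve_right hal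
      exact ⟨[], l, rfl, hal⟩

namespace PreferMax

variable {k n i₀ j N : ℕ}

def nextSymbol (k n j : ℕ) : ℕ :=
  Nat.findGreatest (fun τ => (preferMax k n j).tail ++ [τ] ∉ preferMaxAux k n j) (k - 1)

theorem preferMax_zero (k n : ℕ) : preferMax k n 0 = List.replicate (n - 1) 0 ++ [k - 1] := rfl

theorem preferMax_succ (k n j : ℕ) :
    preferMax k n (j + 1) = (preferMax k n j).tail ++ [nextSymbol k n j] := rfl

theorem preferMaxAux_succ (k n j : ℕ) :
    preferMaxAux k n (j + 1) = preferMax k n (j + 1) :: preferMaxAux k n j := rfl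

theorem mem_preferMaxAux {w : List ℕ} :
    w ∈ preferMaxAux k n j ↔ ∃ l ≤ j, preferMax k n l = w := by
  induction j with
  | zero => simp [preferMaxAux, preferMax, eq_comm]
  | succ j ih =>
    rw [preferMaxAux_succ, List.mem_cons, ih]
    constructor
    · rintro (rfl | ⟨l, hl, rfl⟩)
      exacts [⟨j + 1, le_rfl, rfl⟩, ⟨l, hl.trans j.le_succ, rfl⟩]
    · rintro ⟨l, hl, rfl⟩
      rcases Nat.le_succ_iff.1 hl with hl | rfl
      exacts [Or.inr ⟨l, hl, rfl⟩, Or.inl rfl]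

theorem preferMax_ne_nil (k n j : ℕ) : preferMax k n j ≠ [] := by
  cases j <;> simp [preferMax_zero, preferMax_succ]

theorem nextSymbol_le : nextSymbol k n j ≤ k - 1 := Nat.findGreatest_le _

theorem lt_of_mem_preferMax (hk : 0 < k) {c : ℕ} (hc : c ∈ preferMax k n j) : c < k := by
  induction j with
  | zero =>
    rw [preferMax_zero, List.mem_append, List.mem_singleton] at hc
    rcases hc with hc | rfl
    · rw [List.eq_of_mem_replicate hc]; exact hk
    · omega
  | succ j ih =>
    rw [preferMax_succ, List.mem_append, List.mem_singleton] at hc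
    rcases hc with hc | rfl
    · exact ih (List.mem_of_mem_tail hc)
    · have := nextSymbol_le (k := k) (n := n) (j := j); omega

theorem exists_lt_preferMax_eq_cons (hk : 0 < k) (j : ℕ) :
    ∃ ρ < k, preferMax k n j = ρ :: (preferMax k n j).tail := by
  obtain ⟨ρ, x, h⟩ := List.exists_cons_of_ne_nil (preferMax_ne_nil k n j)
  exact ⟨ρ, lt_of_mem_preferMax hk (by rw [h]; exact List.mem_cons_self), by rw [h, List.tail_cons]⟩

theorem dropLast_preferMax_zero : (preferMax k n 0).dropLast = List.replicate (n - 1) 0 :=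
  List.dropLast_concat

theorem notMem_replicate_zero (hk : 1 < k) (m : ℕ) : k - 1 ∉ List.replicate m 0 := by
  simp only [List.mem_replicate, not_and]
  omega

theorem dropLast_preferMax_zero_ne (hk : 1 < k) {x : List ℕ} (hx : k - 1 ∈ x) :
    (preferMax k n 0).dropLast ≠ x := by
  rw [dropLast_preferMax_zero]
  rintro rfl
  exact notMem_replicate_zero hk _ hx

theorem dropLast_preferMax_succ : (preferMax k n (j + 1)).dropLast = (preferMax k n j).tail :=
  List.dropLast_concat

theorem tail_append_mem_of_nextSymbol_lt {σ : ℕ} (hσ : σ ≤ k - 1) (h : nextSymbol k n j < σ) :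
    (preferMax k n j).tail ++ [σ] ∈ preferMaxAux k n j :=
  not_not.1 (Nat.findGreatest_is_greatest h hσ)

theorem tail_append_mem_of_succ_mem (h : preferMax k n (j + 1) ∈ preferMaxAux k n j) {σ : ℕ}
    (hσ : σ ≤ k - 1) : (preferMax k n j).tail ++ [σ] ∈ preferMaxAux k n j := by
  by_contra hσ'
  exact Nat.findGreatest_spec
    (P := fun τ => (preferMax k n j).tail ++ [τ] ∉ preferMaxAux k n j) hσ hσ' h

section Counting

variable (k n : ℕ)

def entries (N : ℕ) (y : List ℕ) : Finset ℕ := {j ∈ range N | (preferMax k n j).tail = y}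

def exits (N : ℕ) (y : List ℕ) : Finset ℕ := {j ∈ range N | (preferMax k n j).dropLast = y}

theorem card_entries_add_ite (N : ℕ) (y : List ℕ) :
    #(entries k n N y) + (if (preferMax k n 0).dropLast = y then 1 else 0) =
      #(exits k n N y) + (if (preferMax k n N).dropLast = y then 1 else 0) := by
  simp only [entries, exits, card_filter, ← dropLast_preferMax_succ]
  exact (sum_range_succ' (fun j => if (preferMax k n j).dropLast = y then 1 else 0) N).symm.trans
    (sum_range_succ _ N)

variable {k n}

theorem card_entries_le {y : List ℕ} {S : Finset ℕ}
    (hinj : Set.InjOn (preferMax k n) (range N))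
    (hS : ∀ j ∈ entries k n N y, ∃ ρ ∈ S, preferMax k n j = ρ :: y) :
    #(entries k n N y) ≤ #S := by
  calc #(entries k n N y) ≤ #(S.image (· :: y)) := by
        refine card_le_card_of_injOn _ (fun j hj => ?_)
          (hinj.mono (coe_subset.2 (filter_subset _ _)))
        obtain ⟨ρ, hρ, h⟩ := hS j hj
        exact mem_image.2 ⟨ρ, hρ, h.symm⟩
    _ ≤ #S := card_image_le

theorem card_le_card_exits {x : List ℕ} {S : Finset ℕ}
    (hS : ∀ σ ∈ S, ∃ j < N, preferMax k n j = x ++ [σ]) : #S ≤ #(exits k n N x) := by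
  refine card_le_card_of_surjOn (fun j => (preferMax k n j).getLastD 0) fun σ hσ => ?_
  obtain ⟨j, hj, h⟩ := hS σ hσ
  exact ⟨j, by simp [exits, hj, h], by simp [h]⟩

end Counting

def AppearsBefore (k n i₀ : ℕ) (w : List ℕ) : Prop := ∃ j < i₀, preferMax k n j = w

theorem appearsBefore_of_mem_preferMaxAux {w : List ℕ} (hj : j < i₀)
    (h : w ∈ preferMaxAux k n j) : AppearsBefore k n i₀ w := by
  obtain ⟨l, hl, rfl⟩ := mem_preferMaxAux.1 h
  exact ⟨l, hl.trans_lt hj, rfl⟩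

theorem appearsBefore_append_of_lt {x : List ℕ} {τ σ : ℕ} (h : AppearsBefore k n i₀ (x ++ [τ]))
    (hτσ : τ < σ) (hσ : σ ≤ k - 1) : AppearsBefore k n i₀ (x ++ [σ]) := by
  obtain ⟨j, hj, hw⟩ := h
  cases j with
  | zero =>
    have := (List.append_singleton_inj.1 hw).2
    omega
  | succ j =>
    obtain ⟨rfl, rfl⟩ := List.append_singleton_inj.1 hw
    exact appearsBefore_of_mem_preferMaxAux (by omega) (tail_append_mem_of_nextSymbol_lt hσ hτσ)

theorem appearsBefore_append_of_append_zero {x : List ℕ} {σ : ℕ}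
    (h : AppearsBefore k n i₀ (x ++ [0])) (hσ : σ < k) : AppearsBefore k n i₀ (x ++ [σ]) := by
  rcases Nat.eq_zero_or_pos σ with rfl | hσ0
  exacts [h, appearsBefore_append_of_lt h hσ0 (by omega)]

theorem preferMax_succ_notMem_preferMaxAux (hk : 1 < k)
    (hmin : ∀ j ≤ N, k - 1 ∈ preferMax k n j) (hinj : Set.InjOn (preferMax k n) (range (N + 1))) :
    preferMax k n (N + 1) ∉ preferMaxAux k n N := by
  intro hmem
  set x := (preferMax k n N).tail
  have hused : ∀ σ < k, ∃ j < N + 1, preferMax k n j = x ++ [σ] := fun σ hσ => by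
    obtain ⟨j, hj, h⟩ :=
      mem_preferMaxAux.1 (tail_append_mem_of_succ_mem hmem (by omega : σ ≤ k - 1))
    exact ⟨j, by omega, h⟩
  have hx : k - 1 ∈ x := by
    obtain ⟨j, hj, h⟩ := hused 0 (by omega)
    have := hmin j (by omega)
    rw [h, List.mem_append, List.mem_singleton] at this
    exact this.resolve_right (by omega)
  have hexits : k ≤ #(exits k n (N + 1) x) := by
    simpa using card_le_card_exits (S := range k) fun σ hσ => hused σ (mem_range.1 hσ)
  have hentries : #(entries k n (N + 1) x) ≤ k := by
    simpa using card_entries_le (S := range k) hinj fun j hj => by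
      obtain ⟨ρ, hρ, h⟩ := exists_lt_preferMax_eq_cons (n := n) (by omega : 0 < k) j
      exact ⟨ρ, mem_range.2 hρ, by rw [h, (mem_filter.1 hj).2]⟩
  have := card_entries_add_ite k n (N + 1) x
  rw [if_neg (dropLast_preferMax_zero_ne hk hx), if_pos dropLast_preferMax_succ] at this
  omega

theorem injOn_preferMax (hk : 1 < k) (hmin : ∀ j < i₀, k - 1 ∈ preferMax k n j) :
    Set.InjOn (preferMax k n) (range i₀) := by
  suffices ∀ N ≤ i₀, Set.InjOn (preferMax k n) (range N) from this i₀ le_rfl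
  intro N
  induction N with
  | zero => simp
  | succ N ih =>
    intro hN
    rw [range_add_one, coe_insert, Set.injOn_insert (by simp)]
    refine ⟨ih (by omega), ?_⟩
    cases N with
    | zero => simp
    | succ M =>
      have := preferMax_succ_notMem_preferMaxAux hk (fun j hj => hmin j (by omega)) (ih (by omega))
      simpa [mem_preferMaxAux, and_comm, Nat.lt_succ_iff] using this

theorem appearsBefore_cons_of_append_zero (hk : 1 < k) (hi₀ : k - 1 ∉ preferMax k n i₀)
    (hmin : ∀ j < i₀, k - 1 ∈ preferMax k n j) {x : List ℕ} (hx : k - 1 ∈ x) {c : ℕ} (hc : c < k)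
    (h0 : AppearsBefore k n i₀ (x ++ [0])) : AppearsBefore k n i₀ (c :: x) := by
  by_contra hcx
  have hexits : k ≤ #(exits k n i₀ x) := by
    simpa using card_le_card_exits (S := range k) fun σ hσ =>
      appearsBefore_append_of_append_zero h0 (mem_range.1 hσ)
  have hheads : ∀ j ∈ entries k n i₀ x, ∃ ρ ∈ (range k).erase c, preferMax k n j = ρ :: x := by
    intro j hj
    obtain ⟨hj, htail⟩ := mem_filter.1 hj
    obtain ⟨ρ, hρ, h⟩ := exists_lt_preferMax_eq_cons (n := n) (by omega : 0 < k) j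
    rw [htail] at h
    refine ⟨ρ, mem_erase.2 ⟨?_, mem_range.2 hρ⟩, h⟩
    rintro rfl
    exact hcx ⟨j, mem_range.1 hj, h⟩
  have hentries : #(entries k n i₀ x) ≤ k - 1 := by
    have := card_entries_le (injOn_preferMax hk hmin) hheads
    rwa [card_erase_of_mem (mem_range.2 hc), card_range] at this
  have hend : (preferMax k n i₀).dropLast ≠ x := fun h =>
    hi₀ (List.dropLast_subset _ (h ▸ hx))
  have := card_entries_add_ite k n i₀ x
  rw [if_neg (dropLast_preferMax_zero_ne hk hx), if_neg hend] at this
  omega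

theorem preferMax_eq_cons_of_notMem_tail (hmin : ∀ j < i₀, k - 1 ∈ preferMax k n j)
    (hj : j < i₀) (hy : k - 1 ∉ (preferMax k n j).tail) :
    preferMax k n j = (k - 1) :: (preferMax k n j).tail := by
  obtain ⟨ρ, x, h⟩ := List.exists_cons_of_ne_nil (preferMax_ne_nil k n j)
  have := hmin j hj
  rw [h] at this hy ⊢
  rw [List.tail_cons] at hy ⊢
  rw [(List.mem_cons.1 this).resolve_right hy]

theorem card_entries_le_one_of_notMem (hk : 1 < k) (hmin : ∀ j < i₀, k - 1 ∈ preferMax k n j)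
    {y : List ℕ} (hy : k - 1 ∉ y) : #(entries k n i₀ y) ≤ 1 :=
  card_entries_le (S := {k - 1}) (injOn_preferMax hk hmin) fun j hj => by
    obtain ⟨hj, htail⟩ := mem_filter.1 hj
    refine ⟨k - 1, mem_singleton_self _, ?_⟩
    rw [preferMax_eq_cons_of_notMem_tail hmin (mem_range.1 hj) (htail ▸ hy), htail]

/-- The node `z = dropLast w_{i₀}` avoids `k - 1`. As the prefer-max rule did not append `k - 1`
to `z`, the walk has already left `z`, yet it can enter `z` only through `(k - 1) :: z`, i.e. at
most once: so the walk must have started at `z`. -/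
theorem dropLast_preferMax_eq_replicate (hk : 1 < k) (hi₀ : k - 1 ∉ preferMax k n i₀)
    (hmin : ∀ j < i₀, k - 1 ∈ preferMax k n j) (hpos : 0 < i₀) :
    (preferMax k n i₀).dropLast = List.replicate (n - 1) 0 := by
  obtain ⟨m, rfl⟩ : ∃ m, i₀ = m + 1 := ⟨i₀ - 1, by omega⟩
  set z := (preferMax k n (m + 1)).dropLast with hz
  have hzfree : k - 1 ∉ z := fun h => hi₀ (List.dropLast_subset _ h)
  have hleft : 1 ≤ #(exits k n (m + 1) z) := by
    refine card_le_card_exits (S := {k - 1}) fun σ hσ => ?_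
    rw [mem_singleton.1 hσ, hz, dropLast_preferMax_succ]
    have hnext : nextSymbol k n m < k - 1 := by
      refine lt_of_le_of_ne nextSymbol_le fun h => hi₀ ?_
      rw [preferMax_succ, h]
      exact List.mem_append_right _ (List.mem_singleton_self _)
    obtain ⟨j, hj, h⟩ := mem_preferMaxAux.1 (tail_append_mem_of_nextSymbol_lt le_rfl hnext)
    exact ⟨j, by omega, h⟩
  have := card_entries_add_ite k n (m + 1) z
  have hle := card_entries_le_one_of_notMem hk hmin hzfree
  rw [if_pos rfl] at this
  by_contra hne
  rw [dropLast_preferMax_zero, if_neg (Ne.symm hne)] at this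
  omega

theorem appearsBefore_cons_of_append (hk : 1 < k) (hi₀ : k - 1 ∉ preferMax k n i₀)
    (hmin : ∀ j < i₀, k - 1 ∈ preferMax k n j) {y : List ℕ} (hy : k - 1 ∉ y)
    (h : AppearsBefore k n i₀ (y ++ [k - 1])) : AppearsBefore k n i₀ ((k - 1) :: y) := by
  obtain ⟨j₀, hj₀, hw⟩ := h
  have hbalance := card_entries_add_ite k n i₀ y
  rw [dropLast_preferMax_zero, ← dropLast_preferMax_eq_replicate hk hi₀ hmin (by omega),
    add_right_cancel_iff] at hbalance
  have hexits : 1 ≤ #(exits k n i₀ y) :=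
    card_le_card_exits (S := {k - 1}) fun σ hσ => ⟨j₀, hj₀, by rw [hw, mem_singleton.1 hσ]⟩
  obtain ⟨j, hj⟩ := card_pos.1 (hbalance ▸ hexits)
  obtain ⟨hj, htail⟩ := mem_filter.1 hj
  exact ⟨j, mem_range.1 hj, by
    rw [preferMax_eq_cons_of_notMem_tail hmin (mem_range.1 hj) (htail ▸ hy), htail]⟩

variable (k) in
def shiftFill (w : List ℕ) : List ℕ := w.tail ++ [if k - 1 ∈ w.tail then 0 else k - 1]

theorem mem_shiftFill (w : List ℕ) : k - 1 ∈ shiftFill k w := by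
  by_cases h : k - 1 ∈ w.tail <;> simp [shiftFill, h]

theorem lt_of_mem_shiftFill (hk : 0 < k) {w : List ℕ} (hw : ∀ c ∈ w, c < k) :
    ∀ c ∈ shiftFill k w, c < k := by
  intro c hc
  rw [shiftFill, List.mem_append, List.mem_singleton] at hc
  rcases hc with hc | rfl
  · exact hw c (List.mem_of_mem_tail hc)
  · split_ifs <;> omega

theorem iterate_shiftFill_append (v s : List ℕ) :
    (shiftFill k)^[v.length] (v ++ (k - 1) :: s) = (k - 1) :: (s ++ List.replicate v.length 0) := by
  induction v generalizing s with
  | nil => simp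
  | cons c v ih =>
    have : shiftFill k (c :: v ++ (k - 1) :: s) = v ++ (k - 1) :: (s ++ [0]) := by
      simp [shiftFill]
    rw [List.length_cons, Function.iterate_succ_apply, this, ih, List.append_assoc]
    rfl

theorem shiftFill_cons_of_mem (c : ℕ) {x : List ℕ} (hx : k - 1 ∈ x) :
    shiftFill k (c :: x) = x ++ [0] := by
  simp [shiftFill, hx]

theorem shiftFill_cons_of_notMem {y : List ℕ} (hy : k - 1 ∉ y) :
    shiftFill k ((k - 1) :: y) = y ++ [k - 1] := by
  simp [shiftFill, hy]

/-- For `w = v (k-1) s` with `k - 1 ∉ s`: `|v|` steps bring this `k - 1` to the front, one step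
moves it to the back, `|w| - 1` more bring it to the front again followed by zeros, and one more
step gives `0^{|w|-1}(k-1)`. -/
theorem exists_iterate_shiftFill_eq (hk : 1 < k) {w : List ℕ} (hw : k - 1 ∈ w) :
    ∃ m, (shiftFill k)^[m] w = List.replicate (w.length - 1) 0 ++ [k - 1] := by
  obtain ⟨v, s, rfl, hs⟩ := List.exists_eq_append_cons_notMem hw
  set y := s ++ List.replicate v.length 0
  have hy : k - 1 ∉ y := fun h => (List.mem_append.1 h).elim hs (notMem_replicate_zero hk _)
  refine ⟨1 + y.length + 1 + v.length, ?_⟩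
  rw [Function.iterate_add_apply, iterate_shiftFill_append, Function.iterate_add_apply,
    Function.iterate_one, shiftFill_cons_of_notMem hy, Function.iterate_add_apply,
    iterate_shiftFill_append, List.nil_append, Function.iterate_one,
    shiftFill_cons_of_notMem (notMem_replicate_zero hk _)]
  simp [y]
  omega

theorem appearsBefore_of_appearsBefore_shiftFill (hk : 1 < k)
    (hi₀ : k - 1 ∉ preferMax k n i₀) (hmin : ∀ j < i₀, k - 1 ∈ preferMax k n j) {w : List ℕ}
    (hw : k - 1 ∈ w) (hwk : ∀ c ∈ w, c < k) (h : AppearsBefore k n i₀ (shiftFill k w)) :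
    AppearsBefore k n i₀ w := by
  obtain ⟨c, x, rfl⟩ := List.exists_cons_of_ne_nil (List.ne_nil_of_mem hw)
  by_cases hx : k - 1 ∈ x
  · rw [shiftFill_cons_of_mem c hx] at h
    exact appearsBefore_cons_of_append_zero hk hi₀ hmin hx (hwk c List.mem_cons_self) h
  · obtain rfl : k - 1 = c := (List.mem_cons.1 hw).resolve_right hx
    rw [shiftFill_cons_of_notMem hx] at h
    exact appearsBefore_cons_of_append hk hi₀ hmin hx h

theorem appearsBefore_of_appearsBefore_iterate_shiftFill (hk : 1 < k)
    (hi₀ : k - 1 ∉ preferMax k n i₀) (hmin : ∀ j < i₀, k - 1 ∈ preferMax k n j) (m : ℕ)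
    {w : List ℕ} (hw : k - 1 ∈ w) (hwk : ∀ c ∈ w, c < k)
    (h : AppearsBefore k n i₀ ((shiftFill k)^[m] w)) : AppearsBefore k n i₀ w := by
  induction m generalizing w with
  | zero => exact h
  | succ m ih =>
    refine appearsBefore_of_appearsBefore_shiftFill hk hi₀ hmin hw hwk ?_
    exact ih (mem_shiftFill w) (lt_of_mem_shiftFill (by omega) hwk) h

end PreferMax

open PreferMax in
theorem preferMax_layer_before_general (k n i₀ : ℕ) (hk : 1 < k)
    (hi₀ : (k - 1) ∉ preferMax k n i₀)
    (hmin : ∀ j < i₀, (k - 1) ∈ preferMax k n j)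
    (w : List ℕ) (hwlen : w.length = n) (hwk : ∀ σ ∈ w, σ < k) (hwmem : (k - 1) ∈ w) :
    ∃ j < i₀, preferMax k n j = w := by
  have hpos : 0 < i₀ := Nat.pos_of_ne_zero fun h => hi₀ (by simp [h, preferMax_zero])
  obtain ⟨m, hm⟩ := exists_iterate_shiftFill_eq hk hwmem
  refine appearsBefore_of_appearsBefore_iterate_shiftFill hk hi₀ hmin m hwmem hwk ?_
  rw [hm, hwlen]
  exact ⟨0, hpos, preferMax_zero k n⟩

/-- Let `i₀ = min { i : the symbol k-1 does not occur in wᵢ }` for the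
`(k,n)`-prefer-max cycle with `k > 1`, `n ≥ 1`.  Then every word `w ∈ [k]^n`
containing the symbol `k-1` appears among the windows before index `i₀`. -/
theorem preferMax_layer_before (k n i₀ : ℕ) (hk : 1 < k) (hn : 1 ≤ n)
    (hi₀ : (k - 1) ∉ preferMax k n i₀)
    (hmin : ∀ j < i₀, (k - 1) ∈ preferMax k n j)
    (w : List ℕ) (hwlen : w.length = n) (hwk : ∀ σ ∈ w, σ < k) (hwmem : (k - 1) ∈ w) :
    ∃ j < i₀, preferMax k n j = w :=
  preferMax_layer_before_general k n i₀ hk hi₀ hmin w hwlen hwk hwmem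
end

section
/- For every k ≥ 1 and n ≥ 1, the (k,n)-prefer-max cycle (w_i)_{i=0}^{k^n-1} is a De Bruijn sequence of order n over [k]: the construction is well defined (at each step a symbol τ with the required property exists), the words w_0,...,w_{k^n-1} are pairwise distinct, and every word of [k]^n occurs among them. -/
/-!
Read each window `wᵢ` as an edge of the de Bruijn graph on `[k]^(n-1)`, from its prefix to its
suffix; consecutive windows form a walk. Along a walk, for every vertex `y`,
`out(y) + [y is the end] = in(y) + [y is the start]`. While the construction is not stuck the edges
are distinct, so `in(y) ≤ k`. At the first stuck step all `k` out-edges of the current vertex are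
used, which forces it to be the start `0^(n-1)`: the walk is closed, and then `in(y) = out(y)` for
every `y`. By the prefer-max rule, once `y0` is used so is every `yτ`; hence `in(y) = k` and every
`σy` is used. Starting from `0^n`, this reaches every word by prepending letters, so the walk uses
all `kⁿ` edges exactly once.
-/

open Finset

section DeBruijnWalk

theorem card_filter_dropLast_add_ite {α : Type*} [DecidableEq α] (w : ℕ → List α)
    (hw : ∀ j, (w (j + 1)).dropLast = (w j).tail) (i : ℕ) (y : List α) :
    #{j ∈ range (i + 1) | (w j).dropLast = y} + (if (w i).tail = y then 1 else 0) =
      #{j ∈ range (i + 1) | (w j).tail = y} + (if (w 0).dropLast = y then 1 else 0) := by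
  simp only [card_filter, sum_range_succ' (fun j => if (w j).dropLast = y then 1 else 0),
    sum_range_succ (fun j => if (w j).tail = y then 1 else 0), hw]
  ring

variable {k i : ℕ} (w : ℕ → List ℕ)

theorem le_card_filter_dropLast {y : List ℕ} (h : ∀ τ < k, ∃ j ≤ i, w j = y ++ [τ]) :
    k ≤ #{j ∈ range (i + 1) | (w j).dropLast = y} := by
  calc k = #((range k).image fun τ => y ++ [τ]) := by
        rw [card_image_of_injective _ fun a b hab => by simpa using hab, card_range]
    _ ≤ #(({j ∈ range (i + 1) | (w j).dropLast = y}).image w) := card_le_card fun u hu => by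
        simp only [mem_image, mem_range, mem_filter] at hu ⊢
        obtain ⟨τ, hτ, rfl⟩ := hu
        obtain ⟨j, hj, hwj⟩ := h τ hτ
        exact ⟨j, ⟨by omega, by simp [hwj]⟩, hwj⟩
    _ ≤ _ := card_image_le

variable {w}

theorem card_filter_tail_le (hinj : Set.InjOn w (Set.Iic i)) (hlt : ∀ j, ∀ a ∈ w j, a < k)
    (hne : ∀ j, w j ≠ []) (y : List ℕ) :
    #{j ∈ range (i + 1) | (w j).tail = y} ≤ #{σ ∈ range k | ∃ j ≤ i, w j = σ :: y} := by
  refine card_le_card_of_injOn (fun j => (w j).head (hne j)) (fun j hj => ?_)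
    fun a ha b hb hab => ?_
  · simp only [coe_filter, Set.mem_ofPred_eq, mem_range] at hj ⊢
    exact ⟨hlt _ _ (List.head_mem _), j, by omega, by rw [← hj.2, List.cons_head_tail]⟩
  · simp only [coe_filter, Set.mem_ofPred_eq, mem_range] at ha hb
    refine hinj (by simp; omega) (by simp; omega) ?_
    rw [← List.cons_head_tail (hne a), ← List.cons_head_tail (hne b)]
    simp only at hab
    rw [hab, ha.2, hb.2]

theorem tail_eq_dropLast_zero_of_forall_concat (hw : ∀ j, (w (j + 1)).dropLast = (w j).tail)
    (hinj : Set.InjOn w (Set.Iic i)) (hlt : ∀ j, ∀ a ∈ w j, a < k) (hne : ∀ j, w j ≠ [])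
    (h : ∀ τ < k, ∃ j ≤ i, w j = (w i).tail ++ [τ]) : (w i).tail = (w 0).dropLast := by
  have hflow := card_filter_dropLast_add_ite w hw i (w i).tail
  have hout := le_card_filter_dropLast w h
  have hin := card_filter_tail_le hinj hlt hne (w i).tail
  have hcard := (card_filter_le (range k) fun σ => ∃ j ≤ i, w j = σ :: (w i).tail).trans
    (card_range k).le
  by_contra hne'
  rw [if_pos rfl, if_neg (Ne.symm hne')] at hflow
  omega

theorem forall_cons_of_forall_concat (hw : ∀ j, (w (j + 1)).dropLast = (w j).tail)
    (hinj : Set.InjOn w (Set.Iic i)) (hlt : ∀ j, ∀ a ∈ w j, a < k) (hne : ∀ j, w j ≠ [])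
    (hclosed : (w i).tail = (w 0).dropLast) {y : List ℕ}
    (h : ∀ τ < k, ∃ j ≤ i, w j = y ++ [τ]) : ∀ σ < k, ∃ j ≤ i, w j = σ :: y := by
  have hflow := card_filter_dropLast_add_ite w hw i y
  have hout := le_card_filter_dropLast w h
  have hin := card_filter_tail_le hinj hlt hne y
  rw [hclosed] at hflow
  have hfull : {σ ∈ range k | ∃ j ≤ i, w j = σ :: y} = range k :=
    eq_of_subset_of_card_le (filter_subset _ _) (by rw [card_range]; omega)
  intro σ hσ
  rw [← mem_range, ← hfull, mem_filter] at hσ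
  exact hσ.2

end DeBruijnWalk

section PreferMax

variable {k n i : ℕ}

theorem preferMaxAux_succ (i : ℕ) :
    preferMaxAux k n (i + 1) = preferMax k n (i + 1) :: preferMaxAux k n i :=
  rfl

theorem preferMax_zero : preferMax k n 0 = List.replicate (n - 1) 0 ++ [k - 1] := rfl

theorem preferMax_succ (i : ℕ) : preferMax k n (i + 1) = (preferMax k n i).tail ++
    [Nat.findGreatest (fun τ => (preferMax k n i).tail ++ [τ] ∉ preferMaxAux k n i) (k - 1)] :=
  rfl

theorem mem_preferMaxAux {u : List ℕ} :
    u ∈ preferMaxAux k n i ↔ ∃ j ≤ i, preferMax k n j = u := by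
  induction i with
  | zero => simp [preferMaxAux, preferMax, eq_comm]
  | succ i ih =>
    rw [preferMaxAux_succ, List.mem_cons, ih]
    constructor
    · rintro (rfl | ⟨j, hj, rfl⟩)
      exacts [⟨i + 1, le_rfl, rfl⟩, ⟨j, by omega, rfl⟩]
    · rintro ⟨j, hj, rfl⟩
      rcases Nat.lt_or_eq_of_le hj with hj | rfl
      exacts [Or.inr ⟨j, by omega, rfl⟩, Or.inl rfl]

theorem dropLast_preferMax_succ (i : ℕ) :
    (preferMax k n (i + 1)).dropLast = (preferMax k n i).tail := by
  rw [preferMax_succ, List.dropLast_concat]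

theorem preferMax_ne_nil (i : ℕ) : preferMax k n i ≠ [] := by
  cases i <;> simp [preferMax_zero, preferMax_succ]

theorem lt_of_mem_preferMax (hk : 1 ≤ k) (i : ℕ) : ∀ a ∈ preferMax k n i, a < k := by
  induction i with
  | zero =>
    simp only [preferMax_zero, List.mem_append, List.mem_replicate, List.mem_singleton]
    omega
  | succ i ih =>
    simp only [preferMax_succ, List.mem_append, List.mem_singleton]
    rintro a (ha | rfl)
    · exact ih a (List.mem_of_mem_tail ha)
    · have := Nat.findGreatest_le
        (P := fun τ => (preferMax k n i).tail ++ [τ] ∉ preferMaxAux k n i) (k - 1)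
      omega

theorem length_preferMax (hn : 1 ≤ n) (i : ℕ) : (preferMax k n i).length = n := by
  induction i with
  | zero => simp [preferMax_zero]; omega
  | succ i ih => simp [preferMax_succ, ih]; omega

def IsStuck (k n i : ℕ) : Prop :=
  ∀ τ < k, (preferMax k n i).tail ++ [τ] ∈ preferMaxAux k n i

theorem preferMax_succ_not_mem (h : ¬ IsStuck k n i) :
    preferMax k n (i + 1) ∉ preferMaxAux k n i := by
  simp only [IsStuck, not_forall] at h
  obtain ⟨τ, hτ, hfresh⟩ := h
  rw [preferMax_succ]
  exact Nat.findGreatest_spec (P := fun τ => (preferMax k n i).tail ++ [τ] ∉ preferMaxAux k n i)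
    (by omega) hfresh

theorem injOn_preferMax (h : ∀ j < i, ¬ IsStuck k n j) :
    Set.InjOn (preferMax k n) (Set.Iic i) := by
  have hne : ∀ a b, a < b → b ≤ i → preferMax k n a ≠ preferMax k n b := by
    rintro a (_ | b) hab hb heq
    · omega
    · exact preferMax_succ_not_mem (h b (by omega)) (mem_preferMaxAux.2 ⟨a, by omega, heq⟩)
  intro a ha b hb heq
  rcases lt_trichotomy a b with hab | rfl | hab
  exacts [absurd heq (hne a b hab hb), rfl, absurd heq.symm (hne b a hab ha)]

theorem concat_mem_preferMaxAux_of_lt {y : List ℕ} {τ τ' : ℕ}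
    (hmem : y ++ [τ] ∈ preferMaxAux k n i) (hττ' : τ < τ') (hτ' : τ' < k) :
    y ++ [τ'] ∈ preferMaxAux k n i := by
  obtain ⟨j, hj, hwj⟩ := mem_preferMaxAux.1 hmem
  cases j with
  | zero =>
    obtain ⟨-, h⟩ := List.append_inj' hwj rfl
    simp at h
    omega
  | succ j =>
    rw [preferMax_succ] at hwj
    obtain ⟨rfl, h⟩ := List.append_inj' hwj rfl
    simp only [List.cons.injEq, and_true] at h
    have := Nat.findGreatest_is_greatest (h ▸ hττ') (by omega : τ' ≤ k - 1)
    obtain ⟨j', hj', hwj'⟩ := mem_preferMaxAux.1 (not_not.1 this)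
    exact mem_preferMaxAux.2 ⟨j', by omega, hwj'⟩

theorem concat_mem_preferMaxAux_of_concat_zero {y : List ℕ}
    (h : y ++ [0] ∈ preferMaxAux k n i) {τ : ℕ} (hτ : τ < k) :
    y ++ [τ] ∈ preferMaxAux k n i := by
  rcases Nat.eq_zero_or_pos τ with rfl | hpos
  exacts [h, concat_mem_preferMaxAux_of_lt h hpos hτ]

theorem exists_preferMax_eq_of_isStuck (hk : 1 ≤ k) (hn : 1 ≤ n)
    (hfirst : ∀ j < i, ¬ IsStuck k n j) (hi : IsStuck k n i) (u : List ℕ) (hu : u.length = n)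
    (hlt : ∀ a ∈ u, a < k) : ∃ j ≤ i, preferMax k n j = u := by
  have hinj := injOn_preferMax hfirst
  have hclosed : (preferMax k n i).tail = (preferMax k n 0).dropLast :=
    tail_eq_dropLast_zero_of_forall_concat dropLast_preferMax_succ hinj (lt_of_mem_preferMax hk)
      preferMax_ne_nil fun τ hτ => mem_preferMaxAux.1 (hi τ hτ)
  have hcons :
      ∀ y, y ++ [0] ∈ preferMaxAux k n i → ∀ σ < k, σ :: y ∈ preferMaxAux k n i :=
    fun y hy σ hσ => mem_preferMaxAux.2 <|
      forall_cons_of_forall_concat dropLast_preferMax_succ hinj (lt_of_mem_preferMax hk)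
        preferMax_ne_nil hclosed
        (fun τ hτ => mem_preferMaxAux.1 (concat_mem_preferMaxAux_of_concat_zero hy hτ)) σ hσ
  -- every word `v 0^m` is reached from `v.tail 0^(m+1)`, starting from `0^n`
  suffices h : ∀ v m, (v ++ List.replicate m 0).length = n → (∀ a ∈ v, a < k) →
      v ++ List.replicate m 0 ∈ preferMaxAux k n i by
    simpa [mem_preferMaxAux] using h u 0 (by simpa) hlt
  intro v
  induction v with
  | nil =>
    intro m hm _
    have h0 := hi 0 (by omega)
    rw [hclosed, preferMax_zero, List.dropLast_concat, ← List.replicate_succ'] at h0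
    simp only [List.nil_append, List.length_replicate] at hm ⊢
    rw [hm]
    convert h0 using 2
    omega
  | cons σ v ih =>
    intro m hm hv
    have := ih (m + 1) (by simp at hm ⊢; omega) fun a ha => hv a (List.mem_cons_of_mem σ ha)
    rw [List.replicate_succ', ← List.append_assoc] at this
    exact hcons _ this σ (hv σ List.mem_cons_self)

end PreferMax

def words (k : ℕ) : ℕ → Finset (List ℕ)
  | 0 => {[]}
  | n + 1 => (range k ×ˢ words k n).image fun p => p.1 :: p.2

theorem mem_words {k n : ℕ} {u : List ℕ} :
    u ∈ words k n ↔ u.length = n ∧ ∀ a ∈ u, a < k := by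
  induction n generalizing u with
  | zero => cases u <;> simp [words]
  | succ n ih =>
    cases u with
    | nil => simp [words]
    | cons σ u => simp [words, ih, and_comm, and_left_comm]

theorem card_words (k n : ℕ) : #(words k n) = k ^ n := by
  induction n with
  | zero => rfl
  | succ n ih =>
    have hinj : Function.Injective fun p : ℕ × List ℕ => p.1 :: p.2 :=
      fun p q h => Prod.ext (List.cons.inj h).1 (List.cons.inj h).2
    rw [words, card_image_of_injective _ hinj, card_product, card_range, ih, pow_succ, mul_comm]

section Counting

variable {k n i : ℕ}

theorem succ_le_pow_of_forall_not_isStuck (hk : 1 ≤ k) (hn : 1 ≤ n)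
    (h : ∀ j < i, ¬ IsStuck k n j) : i + 1 ≤ k ^ n := by
  calc i + 1 = #(range (i + 1)) := (card_range _).symm
    _ ≤ #(words k n) := card_le_card_of_injOn (preferMax k n)
        (fun j _ => mem_words.2 ⟨length_preferMax hn j, lt_of_mem_preferMax hk j⟩)
        fun a ha b hb => injOn_preferMax h (by simp at ha ⊢; omega) (by simp at hb ⊢; omega)
    _ = k ^ n := card_words k n

theorem exists_isStuck (hk : 1 ≤ k) (hn : 1 ≤ n) : ∃ i, IsStuck k n i := by
  by_contra! h
  have := succ_le_pow_of_forall_not_isStuck (i := k ^ n) hk hn fun j _ => h j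
  omega

theorem pow_le_succ_of_forall_exists_preferMax_eq
    (h : ∀ u : List ℕ, u.length = n → (∀ a ∈ u, a < k) →
      ∃ j ≤ i, preferMax k n j = u) :
    k ^ n ≤ i + 1 := by
  calc k ^ n = #(words k n) := (card_words k n).symm
    _ ≤ #((range (i + 1)).image (preferMax k n)) := card_le_card fun u hu => by
        obtain ⟨j, hj, rfl⟩ := h u (mem_words.1 hu).1 (mem_words.1 hu).2
        exact mem_image_of_mem _ (mem_range.2 (by omega))
    _ ≤ #(range (i + 1)) := card_image_le
    _ = i + 1 := card_range _

end Counting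

/-- The `(k,n)`-prefer-max cycle (`k ≥ 1`, `n ≥ 1`) is a De Bruijn sequence of order `n`
over `[k]`: at each step a symbol `τ ∈ [k]` with `xτ ∉ {w₀,…,wᵢ}` exists (so the
construction is well defined), the windows `w₀,…,w_{kⁿ-1}` are pairwise distinct, and
every word of `[k]^n` occurs among them. -/
theorem preferMax_isDeBruijn (k n : ℕ) (hk : 1 ≤ k) (hn : 1 ≤ n) :
    (∀ i, i + 1 < k ^ n →
      ∃ τ < k, ∀ j ≤ i, preferMax k n j ≠ (preferMax k n i).tail ++ [τ]) ∧
    (∀ i < k ^ n, ∀ j < k ^ n, preferMax k n i = preferMax k n j → i = j) ∧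
    (∀ w : List ℕ, w.length = n → (∀ σ ∈ w, σ < k) → ∃ i < k ^ n, preferMax k n i = w) := by
  classical
  have hstuck := exists_isStuck hk hn
  obtain ⟨i₀, hi₀, hfirst⟩ : ∃ i, IsStuck k n i ∧ ∀ j < i, ¬ IsStuck k n j :=
    ⟨_, Nat.find_spec hstuck, fun _ => Nat.find_min hstuck⟩
  have hcover := exists_preferMax_eq_of_isStuck hk hn hfirst hi₀
  have hcard : i₀ + 1 = k ^ n :=
    (succ_le_pow_of_forall_not_isStuck hk hn hfirst).antisymm
      (pow_le_succ_of_forall_exists_preferMax_eq hcover)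
  refine ⟨fun i hi => ?_, fun i hi j hj => ?_, fun u hu hlt => ?_⟩
  · simpa [IsStuck, mem_preferMaxAux, eq_comm] using hfirst i (by omega)
  · exact injOn_preferMax hfirst (by simp; omega) (by simp; omega)
  · obtain ⟨j, hj, rfl⟩ := hcover u hu hlt
    exact ⟨j, by omega, rfl⟩
end
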